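/- arXiv:1505.07331 — 2 statements merged into one kernel-verified Lean document; each statement's English description precedes it below -/
import Mathlib

section
/- Converse for homothetic motions: if z(t) = r(t)·x is a solution of the n-body problem for some positive real function r(t) (nonconstant in an appropriate sense, with x ≠ 0 collision-free), then there is a constant λ with r² r̈ = −λ and x is a central configuration with constant λ. -/
/-! For a homothetic motion `z(t) = r(t) x`, the homogeneity `∇U(c x) = c⁻² ∇U(x)` turns
Newton's equations into `r(t)² r̈(t) m_k x_k = ∇U(x)_k`. The right-hand side does not depend
on `t`, so testing it on a body with `x_k ≠ 0` shows that `r² r̈` is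
constant. -/

open Finset

/-- The `k`-th component of the gradient `∇U` of the force function. -/
noncomputable def nbodyGradU {n : ℕ} {E : Type*} [NormedAddCommGroup E]
    [InnerProductSpace ℝ E] (m : Fin n → ℝ) (x : Fin n → E) (k : Fin n) : E :=
  ∑ j ∈ univ.erase k, ((m j * m k) / ‖x j - x k‖ ^ 3) • (x j - x k)

section

variable {𝕜 F : Type*} [NontriviallyNormedField 𝕜] [NormedAddCommGroup F] [NormedSpace 𝕜 F]

theorem deriv_deriv_smul_const {r : 𝕜 → 𝕜} (hr : Differentiable 𝕜 r) {t : 𝕜}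
    (hr' : DifferentiableAt 𝕜 (deriv r) t) (v : F) :
    deriv (deriv fun s => r s • v) t = deriv (deriv r) t • v := by
  have hderiv : (deriv fun s => r s • v) = fun s => deriv r s • v :=
    funext fun s => deriv_smul_const (hr s) v
  rw [hderiv]
  exact deriv_smul_const hr' v

end

section

variable {n : ℕ} {E : Type*} [NormedAddCommGroup E] [InnerProductSpace ℝ E]

theorem nbodyGradU_smul (m : Fin n → ℝ) (x : Fin n → E) {c : ℝ} (hc : 0 < c) (k : Fin n) :
    nbodyGradU m (fun i => c • x i) k = (c ^ 2)⁻¹ • nbodyGradU m x k := by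
  unfold nbodyGradU
  rw [smul_sum]
  -- a colliding pair contributes `(_ / 0) • 0 = 0` on both sides
  refine sum_congr rfl fun j _ => ?_
  rw [← smul_sub, norm_smul, Real.norm_eq_abs, abs_of_pos hc, smul_smul, smul_smul]
  congr 1
  field_simp

theorem nbodyGradU_eq_of_homothetic (m : Fin n → ℝ) (x : Fin n → E) {r : ℝ → ℝ}
    (hr : ∀ t, 0 < r t) (hr1 : Differentiable ℝ r) (hr2 : Differentiable ℝ (deriv r))
    (hnewton : ∀ t k, m k • deriv (deriv fun s => r s • x k) t
      = nbodyGradU m (fun i => r t • x i) k) (t : ℝ) (k : Fin n) :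
    nbodyGradU m x k = (r t ^ 2 * deriv (deriv r) t * m k) • x k := by
  have h := hnewton t k
  rw [deriv_deriv_smul_const hr1 (hr2 t), nbodyGradU_smul m x (hr t), smul_smul,
    eq_inv_smul_iff₀ (pow_ne_zero 2 (hr t).ne'), smul_smul] at h
  rw [← h, mul_assoc, mul_comm (m k)]

end

theorem homothetic_motion_converse_general {n : ℕ} {E : Type*} [NormedAddCommGroup E]
    [InnerProductSpace ℝ E]
    (m : Fin n → ℝ) (hm : ∀ k, 0 < m k)
    (x : Fin n → E) (hx : x ≠ 0)
    (r : ℝ → ℝ) (hr : ∀ t, 0 < r t)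
    (hr1 : Differentiable ℝ r) (hr2 : Differentiable ℝ (deriv r))
    (hnewton : ∀ t k, m k • deriv (deriv fun s => r s • x k) t
      = nbodyGradU m (fun i => r t • x i) k) :
    ∃ lam : ℝ, (∀ t, (r t) ^ 2 * deriv (deriv r) t = -lam) ∧
      ∀ k, nbodyGradU m x k = -(lam * m k) • x k := by
  have hcentral := nbodyGradU_eq_of_homothetic m x hr hr1 hr2 hnewton
  obtain ⟨k₀, hk₀⟩ := Function.ne_iff.mp hx
  have hconst : ∀ t, r t ^ 2 * deriv (deriv r) t = r 0 ^ 2 * deriv (deriv r) 0 := fun t =>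
    mul_right_cancel₀ (hm k₀).ne'
      (smul_left_injective ℝ hk₀ ((hcentral t k₀).symm.trans (hcentral 0 k₀)))
  refine ⟨-(r 0 ^ 2 * deriv (deriv r) 0), fun t => by rw [hconst, neg_neg], fun k => ?_⟩
  rw [hcentral 0 k, neg_mul, neg_neg]

/-- Converse for homothetic motions: if `z(t) = r(t) x` solves Newton's equations
for a positive function `r` and a nonzero collision-free configuration `x`, then
`r² r̈ = -λ` for some constant `λ` and `x` is central with constant `λ`. -/
theorem homothetic_motion_converse {n : ℕ} {E : Type*} [NormedAddCommGroup E]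
    [InnerProductSpace ℝ E] [FiniteDimensional ℝ E]
    (m : Fin n → ℝ) (hm : ∀ k, 0 < m k)
    (x : Fin n → E) (hx : x ≠ 0)
    (hcol : ∀ j k : Fin n, j ≠ k → x j ≠ x k)
    (r : ℝ → ℝ) (hr : ∀ t, 0 < r t)
    (hr1 : Differentiable ℝ r) (hr2 : Differentiable ℝ (deriv r))
    (hnewton : ∀ t k, m k • deriv (deriv fun s => r s • x k) t
      = nbodyGradU m (fun i => r t • x i) k) :
    ∃ lam : ℝ, (∀ t, (r t) ^ 2 * deriv (deriv r) t = -lam) ∧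
      ∀ k, nbodyGradU m x k = -(lam * m k) • x k :=
  homothetic_motion_converse_general m hm x hx r hr hr1 hr2 hnewton
end

section
/- Converse for rigid motions: let x ∈ Eⁿ be a central configuration with constant λ > 0 whose components span E, and let Z : E → E be skew-symmetric. Then z(t) = exp(tZ)x solves Newton's equations if and only if Z² = −λ · id, i.e. Z = √λ · J for a compatible complex structure J on E. -/
open Finset

/-!
A skew-symmetric `Z` generates the orthogonal group `exp (t Z)`, and `∇U` is equivariant under
isometries, so along `z(t) = exp (t Z) x` both sides of Newton's equations `m_k z̈_k = ∇_k U(z)`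
are `exp (t Z)` applied to their values at `t = 0`. The equations therefore hold for all `t` iff
`m_k Z² x_k = ∇_k U(x) = -λ m_k x_k` for all `k`, i.e. iff `Z² = -λ` on the span `E` of the `x_k`.
-/

open NormedSpace ContinuousLinearMap
open scoped RealInnerProductSpace

theorem nbodyGradU_comp_linearIsometry {n : ℕ} {E F : Type*} [NormedAddCommGroup E]
    [InnerProductSpace ℝ E] [NormedAddCommGroup F] [InnerProductSpace ℝ F]
    (f : E →ₗᵢ[ℝ] F) (m : Fin n → ℝ) (x : Fin n → E) (k : Fin n) :
    nbodyGradU m (f ∘ x) k = f (nbodyGradU m x k) := by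
  simp only [nbodyGradU, Function.comp_apply, map_sum, map_smul, map_sub, ← f.norm_map]

section Exp

variable {𝕂 E : Type*} [RCLike 𝕂] [NormedAddCommGroup E] [NormedSpace 𝕂 E] [CompleteSpace E]

theorem hasDerivAt_exp_smul_apply (Z : E →L[𝕂] E) (u : E) (t : 𝕂) :
    HasDerivAt (fun s : 𝕂 => exp (s • Z) u) (exp (t • Z) (Z u)) t := by
  simpa using (hasDerivAt_exp_smul_const Z t).clm_apply (hasDerivAt_const t u)

theorem deriv_deriv_exp_smul_apply (Z : E →L[𝕂] E) (u : E) (t : 𝕂) :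
    deriv (deriv fun s : 𝕂 => exp (s • Z) u) t = exp (t • Z) (Z (Z u)) := by
  rw [funext fun s => (hasDerivAt_exp_smul_apply Z u s).deriv,
    (hasDerivAt_exp_smul_apply Z (Z u) t).deriv]

end Exp

section SkewSymmetric

variable {E : Type*} [NormedAddCommGroup E] [InnerProductSpace ℝ E]

theorem mem_skewAdjoint_of_inner_map_eq_neg [CompleteSpace E] {Z : E →L[ℝ] E}
    (hskew : ∀ u v, ⟪Z u, v⟫ = -⟪u, Z v⟫) : Z ∈ skewAdjoint (E →L[ℝ] E) := by
  rw [skewAdjoint.mem_iff, star_eq_adjoint, eq_comm]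
  exact (eq_adjoint_iff _ _).mpr fun u v => by rw [neg_apply, inner_neg_left, hskew, neg_neg]

theorem exp_smul_mem_unitary_of_inner_map_eq_neg [CompleteSpace E] {Z : E →L[ℝ] E}
    (hskew : ∀ u v, ⟪Z u, v⟫ = -⟪u, Z v⟫) (t : ℝ) :
    exp (t • Z) ∈ unitary (E →L[ℝ] E) :=
  let +nondep : NormedAlgebra ℚ (E →L[ℝ] E) := .restrictScalars ℚ ℝ _
  exp_mem_unitary_of_mem_skewAdjoint <|
    skewAdjoint.smul_mem t (mem_skewAdjoint_of_inner_map_eq_neg hskew)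

noncomputable def expSmulLinearIsometry [CompleteSpace E] {Z : E →L[ℝ] E}
    (hskew : ∀ u v, ⟪Z u, v⟫ = -⟪u, Z v⟫) (t : ℝ) : E →ₗᵢ[ℝ] E where
  toLinearMap := (exp (t • Z) : E →L[ℝ] E)
  norm_map' := norm_map_of_mem_unitary (exp_smul_mem_unitary_of_inner_map_eq_neg hskew t)

theorem exists_complexStructure_of_comp_self_eq_neg_smul {Z : E →L[ℝ] E}
    (hskew : ∀ u v, ⟪Z u, v⟫ = -⟪u, Z v⟫) {lam : ℝ} (hlam : 0 < lam)
    (hZZ : Z.comp Z = -(lam • (1 : E →L[ℝ] E))) :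
    ∃ J : E →L[ℝ] E, (∀ u v, ⟪J u, v⟫ = -⟪u, J v⟫) ∧ J.comp J = -1 ∧ Z = √lam • J := by
  have hs : √lam ≠ 0 := (Real.sqrt_pos.mpr hlam).ne'
  refine ⟨(√lam)⁻¹ • Z, fun u v => ?_, ?_, ?_⟩
  · rw [smul_apply, smul_apply, real_inner_smul_left, real_inner_smul_right, hskew, mul_neg]
  · rw [smul_comp, comp_smul, hZZ, smul_smul, smul_neg, smul_smul, ← sq, inv_pow,
      Real.sq_sqrt hlam.le, inv_mul_cancel₀ hlam.ne', one_smul]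
  · rw [smul_smul, mul_inv_cancel₀ hs, one_smul]

end SkewSymmetric

theorem rigidMotion_newton_iff {n : ℕ} {E : Type*} [NormedAddCommGroup E]
    [InnerProductSpace ℝ E] [CompleteSpace E] (m : Fin n → ℝ) (x : Fin n → E) {Z : E →L[ℝ] E}
    (hskew : ∀ u v, ⟪Z u, v⟫ = -⟪u, Z v⟫) :
    (∀ t k, m k • deriv (deriv fun s : ℝ => exp (s • Z) (x k)) t
        = nbodyGradU m (fun i => exp (t • Z) (x i)) k)
    ↔ ∀ k, m k • Z (Z (x k)) = nbodyGradU m x k := by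
  have hexp (t : ℝ) (k : Fin n) :
      nbodyGradU m (fun i => exp (t • Z) (x i)) k = exp (t • Z) (nbodyGradU m x k) :=
    nbodyGradU_comp_linearIsometry (expSmulLinearIsometry hskew t) m x k
  simp only [deriv_deriv_exp_smul_apply, hexp, ← map_smul]
  exact ⟨fun h k => by simpa using h 0 k, fun h t k => by rw [h]⟩

theorem rigid_motion_converse_general {n : ℕ} {E : Type*} [NormedAddCommGroup E]
    [InnerProductSpace ℝ E] [FiniteDimensional ℝ E]
    (m : Fin n → ℝ) (hm : ∀ k, 0 < m k)
    (x : Fin n → E)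
    (hspan : Submodule.span ℝ (Set.range x) = ⊤)
    (lam : ℝ) (hlam : 0 < lam)
    (hcentral : ∀ k, nbodyGradU m x k = -(lam * m k) • x k)
    (Z : E →L[ℝ] E)
    (hskew : ∀ u v : E, (inner ℝ (Z u) v : ℝ) = -(inner ℝ u (Z v) : ℝ)) :
    (∀ t k, m k • deriv (deriv fun s : ℝ => (NormedSpace.exp (s • Z)) (x k)) t
        = nbodyGradU m (fun i => (NormedSpace.exp (t • Z)) (x i)) k)
    ↔ (Z.comp Z = -(lam • (1 : E →L[ℝ] E)) ∧
        ∃ J : E →L[ℝ] E, (∀ u v : E, (inner ℝ (J u) v : ℝ) = -(inner ℝ u (J v) : ℝ)) ∧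
          J.comp J = -1 ∧ Z = Real.sqrt lam • J) := by
  have := FiniteDimensional.complete ℝ E
  have hsq : (∀ k, m k • Z (Z (x k)) = nbodyGradU m x k) ↔ Z.comp Z = -(lam • 1) := by
    have hcancel (k : Fin n) : m k • Z (Z (x k)) = -(lam * m k) • x k ↔
        Z (Z (x k)) = -(lam • x k) := by
      rw [mul_comm, neg_mul_eq_mul_neg, mul_smul, neg_smul, smul_right_inj (hm k).ne']
    simp only [hcentral, hcancel]
    refine ⟨fun h => coe_injective (LinearMap.ext_on_range hspan fun k => ?_),
      fun h k => by simpa using congr($h (x k))⟩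
    simpa using h k
  rw [rigidMotion_newton_iff m x hskew, hsq]
  exact ⟨fun h => ⟨h, exists_complexStructure_of_comp_self_eq_neg_smul hskew hlam h⟩, And.left⟩

/-- Converse for rigid motions: for a central configuration `x` spanning `E` with
constant `λ > 0` and a skew-symmetric `Z`, the curve `z(t) = exp(tZ) x` solves
Newton's equations iff `Z² = -λ·id`, i.e. `Z = √λ J` for a compatible complex
structure `J` on `E`. -/
theorem rigid_motion_converse {n : ℕ} {E : Type*} [NormedAddCommGroup E]
    [InnerProductSpace ℝ E] [FiniteDimensional ℝ E]
    (m : Fin n → ℝ) (hm : ∀ k, 0 < m k)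
    (x : Fin n → E) (hcol : ∀ j k : Fin n, j ≠ k → x j ≠ x k)
    (hspan : Submodule.span ℝ (Set.range x) = ⊤)
    (lam : ℝ) (hlam : 0 < lam)
    (hcentral : ∀ k, nbodyGradU m x k = -(lam * m k) • x k)
    (Z : E →L[ℝ] E)
    (hskew : ∀ u v : E, (inner ℝ (Z u) v : ℝ) = -(inner ℝ u (Z v) : ℝ)) :
    (∀ t k, m k • deriv (deriv fun s : ℝ => (NormedSpace.exp (s • Z)) (x k)) t
        = nbodyGradU m (fun i => (NormedSpace.exp (t • Z)) (x i)) k)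
    ↔ (Z.comp Z = -(lam • (1 : E →L[ℝ] E)) ∧
        ∃ J : E →L[ℝ] E, (∀ u v : E, (inner ℝ (J u) v : ℝ) = -(inner ℝ u (J v) : ℝ)) ∧
          J.comp J = -1 ∧ Z = Real.sqrt lam • J) :=
  rigid_motion_converse_general m hm x hspan lam hlam hcentral Z hskew
end
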